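/- If X is a coreflexive Banach space, then every closed subspace Y of X is coreflexive. -/

import Mathlib

open NormedSpace Filter Topology
open scoped ENNReal


noncomputable section

/-- The annihilator of a subspace `Y ⊆ X` inside the continuous dual of `X`. -/
def annih {X : Type*} [SeminormedAddCommGroup X] [NormedSpace ℝ X] (Y : Submodule ℝ X) :
    Submodule ℝ (StrongDual ℝ X) where
  carrier := {f | ∀ y ∈ Y, f y = 0}
  add_mem' := by
    intro a b ha hb y hy
    simp [ha y hy, hb y hy]
  zero_mem' := by intro y hy; rfl
  smul_mem' := by
    intro c f hf y hy
    simp [hf y hy]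

/-- A Banach space is reflexive iff the canonical embedding into its bidual is surjective. -/
def BReflexive (X : Type*) [SeminormedAddCommGroup X] [NormedSpace ℝ X] : Prop :=
  Function.Surjective (inclusionInDoubleDual ℝ X)

/-- A Banach space is coreflexive iff `X**/J_X(X)` is reflexive. -/
def Coreflexive (X : Type*) [SeminormedAddCommGroup X] [NormedSpace ℝ X] : Prop :=
  @BReflexive ((StrongDual ℝ (StrongDual ℝ X)) ⧸ LinearMap.range (inclusionInDoubleDual ℝ X).toLinearMap)
    (@Submodule.Quotient.seminormedAddCommGroup (StrongDual ℝ (StrongDual ℝ X)) _ ℝ _ _ _)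
    (@Submodule.Quotient.normedSpace (StrongDual ℝ (StrongDual ℝ X)) _ ℝ _ _ _ ℝ _ _ _ _)

/-- The adjoint of a continuous linear map between normed spaces. -/
def adj {E F : Type*} [SeminormedAddCommGroup E] [NormedSpace ℝ E]
    [SeminormedAddCommGroup F] [NormedSpace ℝ F] (f : E →L[ℝ] F) :
    StrongDual ℝ F →L[ℝ] StrongDual ℝ E :=
  (ContinuousLinearMap.compL ℝ E F ℝ).flip f

/-- `X` is weak*-sequentially dense in its bidual. -/
def WStarSeqDense (X : Type*) [SeminormedAddCommGroup X] [NormedSpace ℝ X] : Prop :=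
  ∀ F : StrongDual ℝ (StrongDual ℝ X), ∃ x : ℕ → X, ∀ f : StrongDual ℝ X,
    Tendsto (fun n => inclusionInDoubleDual ℝ X (x n) f) atTop (𝓝 (F f))

/-- `x` is a point of weak-to-norm continuity of the closed unit ball of `X`. -/
def wPC (X : Type*) [SeminormedAddCommGroup X] [NormedSpace ℝ X] (x : X) : Prop :=
  ∀ l : Filter X, (∀ᶠ y in l, ‖y‖ ≤ 1) →
    (∀ f : StrongDual ℝ X, Tendsto (fun y => f y) l (𝓝 (f x))) →
    Tendsto id l (𝓝 x)

/-!
The bidual `i**` of the inclusion `i : Y → X` maps `J_Y(Y)` into `J_X(X)`, so it induces a map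
`Y**/J_Y(Y) → X**/J_X(X)`. This map is bounded below: if `i** F` is within `‖H‖` of `J_X x`,
a functional in `Y^⊥` norming `x` modulo `Y` shows `dist(x, Y) ≤ ‖H‖`, and since `i**` is an
isometry, `F` is then within `2‖H‖` of `J_Y(Y)`. A complete space with a bounded-below operator
into a reflexive space is reflexive: the operator `T` has closed range and, by Hahn–Banach, an
onto adjoint, so if `J b = T** G` then `b = T a` for some `a`, and `J a = G`.
-/

open scoped NNReal

-- Stated through `Dual`, the instances on the bidual are the ones under which type class search
-- finds the quotient norm on `Bidual E ⧸ range (toBidual E)`; with `StrongDual ℝ (StrongDual ℝ E)`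
-- written out, it does not.
abbrev Dual (E : Type*) [SeminormedAddCommGroup E] [NormedSpace ℝ E] : Type _ :=
  StrongDual ℝ E

abbrev Bidual (E : Type*) [SeminormedAddCommGroup E] [NormedSpace ℝ E] : Type _ :=
  Dual (Dual E)

abbrev toBidual (E : Type*) [SeminormedAddCommGroup E] [NormedSpace ℝ E] : E →L[ℝ] Bidual E :=
  inclusionInDoubleDual ℝ E

abbrev BidualQuotient (E : Type*) [SeminormedAddCommGroup E] [NormedSpace ℝ E] : Type _ :=
  Bidual E ⧸ LinearMap.range (toBidual E).toLinearMap

section Annihilator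

variable {W : Type*} [SeminormedAddCommGroup W] [NormedSpace ℝ W]

theorem exists_mem_annih_norm_le_one_apply_eq_norm_mk (Z : Submodule ℝ W) (x : W) :
    ∃ f ∈ annih Z, ‖f‖ ≤ 1 ∧ f x = ‖Z.mkQ x‖ := by
  obtain ⟨g, hg, hgx⟩ := exists_dual_vector'' ℝ (Z.mkQ x)
  refine ⟨g ∘L Z.mkQL, fun z hz => ?_, ?_, hgx⟩
  · simp [(Submodule.Quotient.mk_eq_zero Z).2 hz]
  · refine ContinuousLinearMap.opNorm_le_bound _ zero_le_one fun w => ?_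
    calc ‖g (Z.mkQ w)‖ ≤ ‖g‖ * ‖Z.mkQ w‖ := g.le_opNorm _
      _ ≤ 1 * ‖w‖ :=
        mul_le_mul hg (Submodule.Quotient.norm_mk_le Z w) (norm_nonneg _) zero_le_one

theorem mem_of_forall_mem_annih {Z : Submodule ℝ W} (hZ : IsClosed (Z : Set W)) {w : W}
    (h : ∀ f ∈ annih Z, f w = 0) : w ∈ Z := by
  obtain ⟨f, hf, -, hfw⟩ := exists_mem_annih_norm_le_one_apply_eq_norm_mk Z w
  have hw : ‖Z.mkQ w‖ = 0 := by rw [← hfw, h f hf]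
  have hw' := QuotientAddGroup.norm_mk_eq_zero_iff_mem_closure.1 hw
  rwa [Submodule.coe_toAddSubgroup, hZ.closure_eq] at hw'

end Annihilator

section Adjoint

variable {A B : Type*} [SeminormedAddCommGroup A] [NormedSpace ℝ A]
  [SeminormedAddCommGroup B] [NormedSpace ℝ B]

@[simp]
theorem adj_apply (T : A →L[ℝ] B) (f : Dual B) (a : A) : adj T f a = f (T a) := rfl

theorem adj_adj_inclusionInDoubleDual (T : A →L[ℝ] B) (a : A) :
    adj (adj T) (inclusionInDoubleDual ℝ A a) = inclusionInDoubleDual ℝ B (T a) := rfl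

theorem adj_surjective_of_antilipschitz {T : A →L[ℝ] B} {K : ℝ≥0}
    (hT : AntilipschitzWith K T) : Function.Surjective (adj T) := by
  intro g
  have hker : LinearMap.ker T.toLinearMap ≤ LinearMap.ker g.toLinearMap := fun a ha => by
    have hTa : T a = 0 := ha
    have ha0 : ‖a‖ = 0 :=
      le_antisymm (by simpa [hTa] using hT.le_mul_norm T.map_zero a) (norm_nonneg a)
    simpa [ha0] using g.le_opNorm a
  let φ : LinearMap.range T.toLinearMap →ₗ[ℝ] ℝ :=
    (LinearMap.ker T.toLinearMap).liftQ g.toLinearMap hker ∘ₗ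
      T.toLinearMap.quotKerEquivRange.symm.toLinearMap
  have hφ : ∀ a, φ ⟨T a, a, rfl⟩ = g a := fun a =>
    congrArg ((LinearMap.ker T.toLinearMap).liftQ g.toLinearMap hker)
      (T.toLinearMap.quotKerEquivRange_symm_apply_image a _)
  have hφ_le : ∀ b, ‖φ b‖ ≤ ‖g‖ * K * ‖b‖ := by
    rintro ⟨_, a, rfl⟩
    calc ‖φ ⟨T a, a, rfl⟩‖ = ‖g a‖ := by rw [hφ]
      _ ≤ ‖g‖ * ‖a‖ := g.le_opNorm a
      _ ≤ ‖g‖ * (K * ‖T a‖) := by gcongr; exact hT.le_mul_norm T.map_zero a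
      _ = ‖g‖ * K * ‖T a‖ := by ring
  obtain ⟨f, hf, -⟩ := exists_extension_norm_eq _ (φ.mkContinuous _ hφ_le)
  exact ⟨f, ContinuousLinearMap.ext fun a => (hf ⟨T a, a, rfl⟩).trans (hφ a)⟩

theorem BReflexive.of_antilipschitz [CompleteSpace A] [T0Space B] (hB : BReflexive B)
    {T : A →L[ℝ] B} {K : ℝ≥0} (hT : AntilipschitzWith K T) : BReflexive A := by
  intro G
  obtain ⟨b, hb⟩ := hB (adj (adj T) G)
  have hGb : ∀ f, G (adj T f) = f b := fun f => (congrArg (· f) hb).symm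
  obtain ⟨a, rfl⟩ : b ∈ LinearMap.range T.toLinearMap := by
    have hclosed : IsClosed (LinearMap.range T.toLinearMap : Set B) :=
      (hT.isComplete_range T.uniformContinuous).isClosed
    refine mem_of_forall_mem_annih hclosed fun f hf => ?_
    have hTf : adj T f = 0 := ContinuousLinearMap.ext fun a => hf _ ⟨a, rfl⟩
    rw [← hGb, hTf, map_zero]
  refine ⟨a, ContinuousLinearMap.ext fun g => ?_⟩
  obtain ⟨f, rfl⟩ := adj_surjective_of_antilipschitz hT g
  exact (hGb f).symm

end Adjoint

section Subspace

variable {X : Type*} [SeminormedAddCommGroup X] [NormedSpace ℝ X] (Y : Submodule ℝ X)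

theorem norm_le_norm_adj_adj_subtypeL (F : Bidual Y) :
    ‖F‖ ≤ ‖adj (adj Y.subtypeL) F‖ := by
  refine F.opNorm_le_bound (norm_nonneg _) fun g => ?_
  obtain ⟨f, hfg, hf⟩ := exists_extension_norm_eq Y g
  have hg : adj Y.subtypeL f = g := ContinuousLinearMap.ext hfg
  calc ‖F g‖ = ‖adj (adj Y.subtypeL) F f‖ := by rw [← hg, adj_apply]
    _ ≤ ‖adj (adj Y.subtypeL) F‖ * ‖g‖ := by
        rw [← hf]; exact ContinuousLinearMap.le_opNorm _ _

theorem norm_mkQ_le_norm_adj_adj_subtypeL_sub (F : Bidual Y) (x : X) :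
    ‖Y.mkQ x‖ ≤ ‖adj (adj Y.subtypeL) F - toBidual X x‖ := by
  obtain ⟨f, hf, hf_le, hfx⟩ := exists_mem_annih_norm_le_one_apply_eq_norm_mk Y x
  have hYf : adj Y.subtypeL f = 0 := ContinuousLinearMap.ext fun y => hf y y.2
  set H := adj (adj Y.subtypeL) F - toBidual X x
  calc ‖Y.mkQ x‖ = -H f := by simp [H, hYf, hfx]
    _ ≤ ‖H f‖ := neg_le_abs _
    _ ≤ ‖H‖ * ‖f‖ := H.le_opNorm f
    _ ≤ ‖H‖ := mul_le_of_le_one_right (norm_nonneg H) hf_le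

theorem norm_mk_le_norm_adj_adj_subtypeL_sub_add (F : Bidual Y) (x : X) :
    ‖(Submodule.Quotient.mk F : BidualQuotient Y)‖ ≤
      ‖adj (adj Y.subtypeL) F - toBidual X x‖ + ‖Y.mkQ x‖ := by
  refine le_of_forall_pos_le_add fun ε hε => ?_
  obtain ⟨m, hm, hm_lt⟩ := Submodule.Quotient.norm_mk_lt (Y.mkQ x) hε
  set y : Y := ⟨x - m, (Submodule.Quotient.eq Y).1 hm.symm⟩
  have hFy : (Submodule.Quotient.mk (F - toBidual Y y) : BidualQuotient Y) =
      Submodule.Quotient.mk F :=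
    (Submodule.Quotient.eq _).2 (by simp)
  calc ‖(Submodule.Quotient.mk F : BidualQuotient Y)‖
      ≤ ‖F - toBidual Y y‖ := hFy ▸ Submodule.Quotient.norm_mk_le _ _
    _ ≤ ‖adj (adj Y.subtypeL) (F - toBidual Y y)‖ := norm_le_norm_adj_adj_subtypeL Y _
    _ = ‖(adj (adj Y.subtypeL) F - toBidual X x) + toBidual X m‖ := by
        rw [map_sub, adj_adj_inclusionInDoubleDual, Submodule.subtypeL_apply, map_sub]
        abel_nf
    _ ≤ ‖adj (adj Y.subtypeL) F - toBidual X x‖ + ‖m‖ :=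
        (norm_add_le _ _).trans (by gcongr; exact double_dual_bound ℝ X m)
    _ ≤ _ := by linarith

def bidualQuotientMap : BidualQuotient Y →L[ℝ] BidualQuotient X :=
  (LinearMap.range (toBidual Y).toLinearMap).liftQL
    ((LinearMap.range (toBidual X).toLinearMap).mkQL ∘L adj (adj Y.subtypeL) :
      Bidual Y →L[ℝ] BidualQuotient X)
    (by
      rintro _ ⟨y, rfl⟩
      exact (Submodule.Quotient.mk_eq_zero _).2 ⟨y, rfl⟩)

theorem norm_le_two_mul_norm_bidualQuotientMap (q : BidualQuotient Y) :
    ‖q‖ ≤ 2 * ‖bidualQuotientMap Y q‖ := by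
  obtain ⟨F, rfl⟩ :=
    Submodule.Quotient.mk_surjective (LinearMap.range (toBidual Y).toLinearMap) q
  rw [← div_le_iff₀' two_pos]
  refine QuotientAddGroup.le_norm_iff.2 fun G hG => ?_
  obtain ⟨x, hx⟩ : adj (adj Y.subtypeL) F - G ∈ LinearMap.range (toBidual X).toLinearMap :=
    (Submodule.Quotient.eq _).1 hG.symm
  obtain rfl : G = adj (adj Y.subtypeL) F - toBidual X x := by
    rw [show toBidual X x = _ from hx, sub_sub_cancel]
  linarith [norm_mk_le_norm_adj_adj_subtypeL_sub_add Y F x,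
    norm_mkQ_le_norm_adj_adj_subtypeL_sub Y F x]

theorem antilipschitzWith_bidualQuotientMap : AntilipschitzWith 2 (bidualQuotientMap Y) :=
  AntilipschitzWith.of_le_mul_dist fun q q' => by
    simpa [dist_eq_norm, ← map_sub] using norm_le_two_mul_norm_bidualQuotientMap Y (q - q')

end Subspace

theorem stmt10_general (X : Type*) [NormedAddCommGroup X] [NormedSpace ℝ X] [CompleteSpace X]
    (hX : Coreflexive X) (Y : Submodule ℝ X) :
    Coreflexive ↥Y := by
  -- an instance argument: it makes `BidualQuotient X` a T0 space
  have : IsClosed (LinearMap.range (toBidual X).toLinearMap : Set (Bidual X)) := by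
    rw [LinearMap.coe_range]
    exact ((inclusionInDoubleDualLi ℝ (E := X)).isometry.antilipschitz.isComplete_range
      (inclusionInDoubleDualLi ℝ).isometry.uniformContinuous).isClosed
  exact BReflexive.of_antilipschitz (A := BidualQuotient Y) (B := BidualQuotient X) hX
    (antilipschitzWith_bidualQuotientMap Y)

theorem stmt10 (X : Type*) [NormedAddCommGroup X] [NormedSpace ℝ X] [CompleteSpace X]
    (hX : Coreflexive X) (Y : Submodule ℝ X) (hY : IsClosed (Y : Set X)) :
    Coreflexive ↥Y :=
  stmt10_general X hX Y
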